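/- arXiv:1812.07072 — 2 statements merged into one kernel-verified Lean document; each statement's English description precedes it below -/
import Mathlib

section
/- For all integers n ≥ 1 and N ≥ 1, every (n,(−N,N))-universal graph U satisfies |U|^n ≥ N^{n−1}; equivalently, |U| ≥ N^{1−1/n}. -/
open Filter


/-- A finite path: a list of consecutive edges, all belonging to `E`,
starting at `u` (when nonempty). -/
def FinPath {V : Type} (E : Set (V × ℤ × V)) (u : V) (p : List (V × ℤ × V)) : Prop :=
  (∀ e ∈ p, e ∈ E) ∧ List.Chain' (fun e e' => e.2.2 = e'.1) p ∧
    ∀ h : p ≠ [], (p.head h).1 = u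

/-- The last vertex of a finite path starting at `u` (which is `u` itself for the empty path). -/
def lastV {V : Type} (u : V) (p : List (V × ℤ × V)) : V :=
  (p.getLastD (u, 0, u)).2.2

/-- An infinite path: a sequence of consecutive edges, all belonging to `E`. -/
def InfPath {V : Type} (E : Set (V × ℤ × V)) (π : ℕ → V × ℤ × V) : Prop :=
  (∀ i, π i ∈ E) ∧ ∀ i, (π i).2.2 = (π (i + 1)).1

/-- The total weight of a finite path. -/
def pathWeight {V : Type} (p : List (V × ℤ × V)) : ℤ :=
  (p.map fun e => e.2.1).sum

/-- A sequence of integer weights satisfies mean payoff if the liminf of the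
averages of its prefixes is nonnegative. -/
def MeanPayoffSeq (w : ℕ → ℤ) : Prop :=
  0 ≤ Filter.atTop.liminf (fun ℓ : ℕ => (∑ i ∈ Finset.range ℓ, (w i : ℝ)) / (ℓ : ℝ))

/-- A graph (given by its edge set) satisfies mean payoff if all its infinite paths do. -/
def SatMP {V : Type} (E : Set (V × ℤ × V)) : Prop :=
  ∀ π : ℕ → V × ℤ × V, InfPath E π → MeanPayoffSeq (fun i => (π i).2.1)

/-- A cycle: a nonempty finite path whose first and last vertices coincide. -/
def IsCycle {V : Type} (E : Set (V × ℤ × V)) (p : List (V × ℤ × V)) : Prop :=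
  p ≠ [] ∧ ∃ v, FinPath E v p ∧ lastV v p = v

/-- A `W`-graph: a finite set of vertices, edges labelled by weights in `W`,
and an initial vertex from which every vertex is reachable. -/
structure WGraph (W : Finset ℤ) where
  V : Type
  fin : Fintype V
  E : Set (V × ℤ × V)
  init : V
  wt : ∀ e ∈ E, e.2.1 ∈ W
  reach : ∀ v : V, ∃ p, FinPath E init p ∧ lastV init p = v

attribute [instance] WGraph.fin

/-- The `W`-linear graph on a set `A ⊆ ℤ`: vertices are the elements of `A`, and
for `v, v' ∈ A` and `w ∈ W` there is an edge `(v, w, v')` whenever `v' - v ≤ w`. -/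
def LinE (W : Finset ℤ) (A : Set ℤ) : Set (ℤ × ℤ × ℤ) :=
  {e | e.1 ∈ A ∧ e.2.2 ∈ A ∧ e.2.1 ∈ W ∧ e.2.2 - e.1 ≤ e.2.1}

/-- A homomorphism of labelled graphs (no requirement on initial vertices). -/
def IsHom {V U : Type} (E : Set (V × ℤ × V)) (E' : Set (U × ℤ × U)) (φ : V → U) : Prop :=
  ∀ e ∈ E, (φ e.1, e.2.1, φ e.2.2) ∈ E'

/-- A graph (given by its edge set) is `(n,W)`-universal if it satisfies mean payoff and
every `(n,W)`-graph satisfying mean payoff admits a homomorphism into it. -/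
def Universal (n : ℕ) (W : Finset ℤ) {U : Type} (EU : Set (U × ℤ × U)) : Prop :=
  SatMP EU ∧
    ∀ G : WGraph W, Fintype.card G.V ≤ n → SatMP G.E → ∃ φ : G.V → U, IsHom G.E EU φ

/-- The set of weights `(-N, N)`: integers `w` with `-N < w < N`. -/
noncomputable def Wball (N : ℕ) : Finset ℤ := Finset.Ioo (-(N : ℤ)) (N : ℤ)

/-- `φ` is the distance function from the initial vertex: `φ v` is the minimum total
weight of a finite path from the initial vertex to `v`. -/
def IsDistFrom {W : Finset ℤ} (G : WGraph W) (φ : G.V → ℤ) : Prop :=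
  ∀ v : G.V,
    (∃ p, FinPath G.E G.init p ∧ lastV G.init p = v ∧ pathWeight p = φ v) ∧
    ∀ p, FinPath G.E G.init p → lastV G.init p = v → φ v ≤ pathWeight p


/-!
A potential `a : Fin n → [0, N)` with `a 0 = 0` yields the `n`-cycle whose edge `k → k + 1`
has weight `a (k + 1) - a k`: its weights lie in `(-N, N)` and every walk telescopes, so it
satisfies mean payoff, and there are `N ^ (n - 1)` such cycles. Two of them cannot share a
homomorphism `ψ` into a mean-payoff graph: if `a i < b i`, following the `a`-edges from `ψ 0`
to `ψ i` and the `b`-edges back is a closed walk of weight `a i - b i < 0`, and repeating it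
forever violates mean payoff. Hence `|U| ^ n ≥ N ^ (n - 1)`.
-/

open Finset

lemma MeanPayoffSeq.of_abs_sum_le {w : ℕ → ℤ} (C : ℝ)
    (h : ∀ ℓ, |∑ i ∈ range ℓ, (w i : ℝ)| ≤ C) : MeanPayoffSeq w := by
  have hlim : Tendsto (fun ℓ : ℕ => (∑ i ∈ range ℓ, (w i : ℝ)) / ℓ) atTop (nhds 0) := by
    refine squeeze_zero_norm (fun ℓ => ?_) (tendsto_const_div_atTop_nhds_zero_nat C)
    rw [Real.norm_eq_abs, abs_div, Nat.abs_cast]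
    exact div_le_div_of_nonneg_right (h ℓ) ℓ.cast_nonneg
  rw [MeanPayoffSeq, hlim.liminf_eq]

lemma Function.Periodic.sum_range_mul {w : ℕ → ℤ} {p : ℕ} (hw : Function.Periodic w p)
    (k : ℕ) : ∑ i ∈ range (k * p), w i = k * ∑ i ∈ range p, w i := by
  induction k with
  | zero => simp
  | succ k ih =>
    have hshift : ∀ x ∈ range p, w (k * p + x) = w x := fun x _ => by
      simpa [add_comm] using hw.nat_mul k x
    rw [add_mul, one_mul, sum_range_add, ih, sum_congr rfl hshift]
    push_cast
    ring

lemma MeanPayoffSeq.sum_range_nonneg_of_periodic {w : ℕ → ℤ} {p : ℕ} (hp : 0 < p)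
    (hw : Function.Periodic w p) (h : MeanPayoffSeq w) : 0 ≤ ∑ i ∈ range p, w i := by
  set M : ℤ := ∑ i ∈ range p, |w i|
  have hM : ∀ i, -M ≤ w i := fun i => by
    rw [← hw.map_mod_nat i, neg_le]
    exact (neg_le_abs _).trans
      (single_le_sum (fun j _ => abs_nonneg (w j)) (mem_range.2 (Nat.mod_lt i hp)))
  have hlow : ∀ ℓ : ℕ, -(M : ℝ) ≤ (∑ i ∈ range ℓ, (w i : ℝ)) / ℓ := by
    intro ℓ
    rcases Nat.eq_zero_or_pos ℓ with rfl | hℓ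
    · simpa using sum_nonneg fun j _ => abs_nonneg (w j)
    · rw [le_div_iff₀ (by exact_mod_cast hℓ)]
      simpa [mul_comm] using card_nsmul_le_sum (range ℓ) (fun i => (w i : ℝ)) (-M)
        (fun i _ => by exact_mod_cast hM i)
  have hperiod : ∃ᶠ ℓ in atTop,
      (∑ i ∈ range ℓ, (w i : ℝ)) / ℓ ≤ (∑ i ∈ range p, w i : ℤ) / (p : ℝ) := by
    refine frequently_atTop.2 fun m => ⟨(m + 1) * p, by nlinarith, le_of_eq ?_⟩
    rw [← Int.cast_sum, hw.sum_range_mul]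
    push_cast
    field_simp
  have hS := h.trans (liminf_le_of_frequently_le hperiod (isBoundedUnder_of ⟨-M, hlow⟩))
  rw [le_div_iff₀ (by exact_mod_cast hp), zero_mul] at hS
  exact_mod_cast hS

open Fin.NatCast

variable {V : Type}

lemma satMP_of_potential [Finite V] {E : Set (V × ℤ × V)} (a : V → ℤ)
    (ha : ∀ e ∈ E, e.2.1 = a e.2.2 - a e.1) : SatMP E := by
  obtain ⟨C, hC⟩ := Finite.exists_le fun v => |a v|
  intro π ⟨hmem, hchain⟩
  refine MeanPayoffSeq.of_abs_sum_le (2 * C) fun ℓ => ?_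
  have htele : ∑ i ∈ range ℓ, (π i).2.1 = a (π ℓ).1 - a (π 0).1 := by
    rw [← sum_range_sub (fun i => a (π i).1)]
    exact sum_congr rfl fun i _ => by rw [ha _ (hmem i), hchain i]
  have hbound : |a (π ℓ).1 - a (π 0).1| ≤ 2 * C := by
    have := hC (π ℓ).1; have := hC (π 0).1
    rw [abs_le] at *; constructor <;> linarith
  rw [← Int.cast_sum, htele]
  exact_mod_cast hbound

lemma SatMP.sum_nonneg_of_closedWalk {n : ℕ} [NeZero n] {E : Set (V × ℤ × V)} (hE : SatMP E)
    (ψ : Fin n → V) (s : Fin n → ℤ) (h : ∀ k, (ψ k, s k, ψ (k + 1)) ∈ E) : 0 ≤ ∑ k, s k := by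
  let π : ℕ → V × ℤ × V := fun m => (ψ m, s m, ψ (m + 1))
  have hπ : InfPath E π := ⟨fun m => h m, fun m => by simp [π]⟩
  have hper : Function.Periodic π n := fun m => by simp [π]
  have := MeanPayoffSeq.sum_range_nonneg_of_periodic (NeZero.pos n)
    (fun m => congrArg (fun e => e.2.1) (hper m)) (hE π hπ)
  simpa [π, ← Fin.sum_univ_eq_sum_range] using this

section Cycle

variable {n : ℕ} [NeZero n]

def cycleEdges (a : Fin n → ℤ) : Set (Fin n × ℤ × Fin n) :=
  Set.range fun k => (k, a (k + 1) - a k, k + 1)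

lemma satMP_cycleEdges (a : Fin n → ℤ) : SatMP (cycleEdges a) :=
  satMP_of_potential a (by rintro _ ⟨k, rfl⟩; rfl)

lemma sum_ite_lt_telescope (a b : Fin n → ℤ) (i : Fin n) :
    ∑ k, (if k < i then a (k + 1) - a k else b (k + 1) - b k) = (a i - a 0) - (b i - b 0) := by
  let f : ℕ → ℤ := fun m => a m
  let g : ℕ → ℤ := fun m => b m
  have hcast : ∀ k : Fin n, (if k < i then a (k + 1) - a k else b (k + 1) - b k) =
      if k.val < i.val then f (k.val + 1) - f k.val else g (k.val + 1) - g k.val := fun k => by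
    simp only [f, g, Fin.lt_def, Nat.cast_succ, Fin.cast_val_eq_self]
  rw [sum_congr rfl fun k _ => hcast k, Fin.sum_univ_eq_sum_range
    (fun m => if m < i.val then f (m + 1) - f m else g (m + 1) - g m),
    ← sum_range_add_sum_Ico _ i.isLt.le,
    sum_congr rfl fun m hm => if_pos (mem_range.1 hm),
    sum_congr rfl fun m hm => if_neg (not_lt.2 (mem_Ico.1 hm).1),
    sum_range_sub, sum_Ico_sub _ i.isLt.le]
  simp [f, g]
  ring

lemma SatMP.sub_eq_of_isHom_cycleEdges {U : Type} {E : Set (U × ℤ × U)} (hE : SatMP E)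
    {a b : Fin n → ℤ} {ψ : Fin n → U} (ha : IsHom (cycleEdges a) E ψ)
    (hb : IsHom (cycleEdges b) E ψ) (i : Fin n) : a i - a 0 = b i - b 0 := by
  have switch : ∀ {a b : Fin n → ℤ}, IsHom (cycleEdges a) E ψ → IsHom (cycleEdges b) E ψ →
      0 ≤ (a i - a 0) - (b i - b 0) := by
    intro a b ha hb
    rw [← sum_ite_lt_telescope]
    refine hE.sum_nonneg_of_closedWalk ψ _ fun k => ?_
    split_ifs
    · exact ha _ ⟨k, rfl⟩
    · exact hb _ ⟨k, rfl⟩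
  linarith [switch ha hb, switch hb ha]

lemma exists_finPath_cycleEdges (a : Fin n → ℤ) (v : Fin n) :
    ∃ p, FinPath (cycleEdges a) 0 p ∧ lastV 0 p = v := by
  let edge : ℕ → Fin n × ℤ × Fin n := fun m => (m, a (m + 1) - a m, m + 1)
  refine ⟨(List.range v.val).map edge, ⟨?_, ?_, ?_⟩, ?_⟩
  · simp only [List.mem_map, List.mem_range]
    rintro _ ⟨m, -, rfl⟩
    exact ⟨m, rfl⟩
  · show List.IsChain _ _
    rw [List.isChain_map, List.isChain_range]
    intro m _
    simp [edge]
  · intro hne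
    simp [edge]
  · rcases Nat.eq_zero_or_pos v.val with hv | hv
    · simp [lastV, hv, Fin.ext_iff]
    · obtain ⟨m, hm⟩ := Nat.exists_eq_succ_of_ne_zero hv.ne'
      simp only [lastV, edge, hm, List.range_succ, List.map_append, List.map_singleton,
        List.getLastD_concat]
      rw [← Nat.cast_succ, ← hm, Fin.cast_val_eq_self]

end Cycle

def cycleGraph {n : ℕ} [NeZero n] (N : ℕ) (a : Fin n → Fin N) : WGraph (Wball N) where
  V := Fin n
  fin := inferInstance
  E := cycleEdges fun k => (a k : ℤ)
  init := 0
  wt := by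
    rintro _ ⟨k, rfl⟩
    have := (a k).isLt; have := (a (k + 1)).isLt
    simp only [Wball, Finset.mem_Ioo]
    omega
  reach := exists_finPath_cycleEdges _

lemma Universal.pow_le_card_pow {n N : ℕ} (hn : 1 ≤ n) (hN : 1 ≤ N) {U : Type} [Fintype U]
    {EU : Set (U × ℤ × U)} (hU : Universal n (Wball N) EU) :
    N ^ (n - 1) ≤ Fintype.card U ^ n := by
  obtain ⟨m, rfl⟩ : ∃ m, n = m + 1 := ⟨n - 1, by omega⟩
  obtain ⟨hsat, hhom⟩ := hU
  let pot (b : Fin m → Fin N) : Fin (m + 1) → Fin N := Fin.cons ⟨0, hN⟩ b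
  have hhom_pot : ∀ b, ∃ φ : Fin (m + 1) → U, IsHom (cycleEdges fun k => (pot b k : ℤ)) EU φ :=
    fun b => hhom (cycleGraph N (pot b)) (Fintype.card_fin _).le
      (satMP_cycleEdges fun k => (pot b k : ℤ))
  choose Φ hΦ using hhom_pot
  have hinj : Function.Injective Φ := by
    intro b b' h
    have hpot := hsat.sub_eq_of_isHom_cycleEdges (hΦ b) (h ▸ hΦ b')
    refine Fin.cons_right_injective (α := fun _ => Fin N) ⟨0, hN⟩ (funext fun i => Fin.ext ?_)
    simpa [pot] using hpot i
  simpa using Fintype.card_le_of_injective Φ hinj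

lemma Real.rpow_one_sub_inv_le_of_pow_le {x y : ℝ} (hx : 0 ≤ x) (hy : 0 ≤ y) {n : ℕ}
    (hn : 1 ≤ n) (h : x ^ (n - 1) ≤ y ^ n) : x ^ (1 - 1 / (n : ℝ)) ≤ y := by
  have hn' : (n : ℝ) ≠ 0 := by positivity
  have hexp : 1 - 1 / (n : ℝ) = ((n - 1 : ℕ) : ℝ) * (n : ℝ)⁻¹ := by
    rw [Nat.cast_sub hn, Nat.cast_one]
    field_simp
  calc x ^ (1 - 1 / (n : ℝ)) = (x ^ (n - 1)) ^ (n : ℝ)⁻¹ := by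
        rw [hexp, Real.rpow_mul hx, Real.rpow_natCast]
    _ ≤ (y ^ n) ^ (n : ℝ)⁻¹ := by gcongr
    _ = y := Real.pow_rpow_inv_natCast hy (by omega)

/-- for `n, N ≥ 1`, every `(n, (-N,N))`-universal graph `U`
satisfies `|U|^n ≥ N^(n-1)`; equivalently, `|U| ≥ N^(1 - 1/n)`. -/
theorem universal_lower_bound_weight (n N : ℕ) (hn : 1 ≤ n) (hN : 1 ≤ N)
    (U : Type) [Fintype U] (EU : Set (U × ℤ × U))
    (hU : Universal n (Wball N) EU) :
    N ^ (n - 1) ≤ Fintype.card U ^ n ∧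
    (N : ℝ) ^ ((1 : ℝ) - 1 / (n : ℝ)) ≤ (Fintype.card U : ℝ) := by
  have hcard := hU.pow_le_card_pow hn hN
  exact ⟨hcard, Real.rpow_one_sub_inv_le_of_pow_le (by positivity) (by positivity) hn
    (by exact_mod_cast hcard)⟩
end

section
/- Let Q be a finite set and let G be a directed graph with vertex set Q and edges labelled by integers (edges are triples (q,w,q') with w ∈ ℤ), with no negative cycles, which is maximal in the following sense: for all q, q' ∈ Q, if (q,0,q') is not an edge of G, then the graph obtained from G by adding the edge (q,0,q') contains a negative cycle. Then the binary relation on Q defined by q ≤ q' iff (q,0,q') is an edge of G is reflexive, transitive, and total (for all q, q', either q ≤ q' or q' ≤ q). -/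
open Filter


/-!
A path in `E ∪ {(a, 0, b)}` splits, at its first use of the new edge, into an `E`-path ending
at `a` and a path starting at `b`; later uses of the edge can be cut out unless `E` has a negative
path from `b` to `a`. Hence if `E` has no negative cycle but `E ∪ {(a, 0, b)}` has one, then `E`
has a path of weight `≤ -1` from `b` to `a`. Under maximality such paths go backwards along every
missing `0`-edge, and closing them up with `0`-edges of `E`, or with each other, would produce a
negative cycle in `E`; this gives reflexivity, transitivity and totality.
-/

section Paths

variable {V : Type} {E : Set (V × ℤ × V)}

@[simp]
lemma pathWeight_nil : pathWeight ([] : List (V × ℤ × V)) = 0 := rfl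

@[simp]
lemma pathWeight_cons (x : V × ℤ × V) (p : List (V × ℤ × V)) :
    pathWeight (x :: p) = x.2.1 + pathWeight p := by
  simp [pathWeight]

lemma pathWeight_append (p q : List (V × ℤ × V)) :
    pathWeight (p ++ q) = pathWeight p + pathWeight q := by
  simp [pathWeight]

@[simp]
lemma lastV_cons (u : V) (x : V × ℤ × V) (p : List (V × ℤ × V)) :
    lastV u (x :: p) = lastV x.2.2 p := by
  cases p <;> rfl

lemma lastV_append (u : V) (p q : List (V × ℤ × V)) :
    lastV u (p ++ q) = lastV (lastV u p) q := by
  induction p generalizing u with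
  | nil => rfl
  | cons x p ih => simp [ih]

lemma finPath_nil (u : V) : FinPath E u [] :=
  ⟨by simp, List.isChain_nil, fun h => absurd rfl h⟩

lemma finPath_cons_iff {u : V} {x : V × ℤ × V} {p : List (V × ℤ × V)} :
    FinPath E u (x :: p) ↔ x ∈ E ∧ x.1 = u ∧ FinPath E x.2.2 p := by
  cases p with
  | nil => simp [FinPath, List.Chain', and_comm]
  | cons y p =>
    simp only [FinPath, List.Chain', List.mem_cons, forall_eq_or_imp, List.isChain_cons_cons,
      ne_eq, reduceCtorEq, not_false_eq_true, List.head_cons, forall_const]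
    constructor
    · rintro ⟨⟨hx, hE⟩, ⟨hxy, hch⟩, rfl⟩
      exact ⟨hx, rfl, hE, hch, hxy.symm⟩
    · rintro ⟨hx, rfl, hE, hch, hy⟩
      exact ⟨⟨hx, hE⟩, ⟨hy.symm, hch⟩, rfl⟩

lemma FinPath.append {u : V} {p q : List (V × ℤ × V)} (hp : FinPath E u p)
    (hq : FinPath E (lastV u p) q) : FinPath E u (p ++ q) := by
  induction p generalizing u with
  | nil => exact hq
  | cons x p ih =>
    obtain ⟨hx, hxu, hrest⟩ := finPath_cons_iff.mp hp
    exact finPath_cons_iff.mpr ⟨hx, hxu, ih hrest (by rwa [lastV_cons] at hq)⟩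

end Paths

section ReachLE

variable {V : Type} {E : Set (V × ℤ × V)}

def ReachLE (E : Set (V × ℤ × V)) (u v : V) (w : ℤ) : Prop :=
  ∃ p, FinPath E u p ∧ lastV u p = v ∧ pathWeight p ≤ w

lemma ReachLE.refl (u : V) : ReachLE E u u 0 :=
  ⟨[], finPath_nil u, rfl, le_rfl⟩

lemma ReachLE.of_mem {u v : V} {w : ℤ} (h : (u, w, v) ∈ E) : ReachLE E u v w :=
  ⟨[(u, w, v)], finPath_cons_iff.mpr ⟨h, rfl, finPath_nil v⟩, rfl, by simp⟩

lemma ReachLE.mono {u v : V} {w w' : ℤ} (h : ReachLE E u v w) (hw : w ≤ w') :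
    ReachLE E u v w' :=
  let ⟨p, hp, hv, hpw⟩ := h
  ⟨p, hp, hv, hpw.trans hw⟩

lemma ReachLE.trans {u v x : V} {w w' : ℤ} (h : ReachLE E u v w) (h' : ReachLE E v x w') :
    ReachLE E u x (w + w') := by
  obtain ⟨p, hp, rfl, hpw⟩ := h
  obtain ⟨q, hq, rfl, hqw⟩ := h'
  exact ⟨p ++ q, hp.append hq, lastV_append u p q, by rw [pathWeight_append]; omega⟩

lemma nonneg_of_reachLE_self (hE : ¬ ∃ p, IsCycle E p ∧ pathWeight p < 0) {v : V} {w : ℤ}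
    (h : ReachLE E v v w) : 0 ≤ w := by
  obtain ⟨p, hp, hv, hpw⟩ := h
  by_contra hw
  have hne : p ≠ [] := by rintro rfl; simp at hpw; omega
  exact hE ⟨p, ⟨hne, v, hp, hv⟩, by omega⟩

lemma FinPath.reachLE_or_split_of_insert {a b : V} (hba : ∀ w, ReachLE E b a w → 0 ≤ w)
    {u : V} {p : List (V × ℤ × V)} (hp : FinPath (E ∪ {(a, 0, b)}) u p) :
    ReachLE E u (lastV u p) (pathWeight p) ∨
      ∃ w₁ w₂, w₁ + w₂ ≤ pathWeight p ∧ ReachLE E u a w₁ ∧ ReachLE E b (lastV u p) w₂ := by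
  induction p generalizing u with
  | nil => exact Or.inl (ReachLE.refl u)
  | cons x p ih =>
    obtain ⟨hx, rfl, hrest⟩ := finPath_cons_iff.mp hp
    simp only [lastV_cons, pathWeight_cons]
    rcases hx with hx | rfl
    · have hxE : ReachLE E x.1 x.2.2 x.2.1 := ReachLE.of_mem hx
      rcases ih hrest with h | ⟨w₁, w₂, hw, h₁, h₂⟩
      · exact Or.inl (hxE.trans h)
      · exact Or.inr ⟨x.2.1 + w₁, w₂, by omega, hxE.trans h₁, h₂⟩
    · rcases ih hrest with h | ⟨w₁, w₂, hw, h₁, h₂⟩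
      · exact Or.inr ⟨0, pathWeight p, by simp, ReachLE.refl a, h⟩
      · have := hba w₁ h₁
        exact Or.inr ⟨0, w₂, by dsimp only; omega, ReachLE.refl a, h₂⟩

lemma reachLE_neg_one_of_negCycle_insert (hE : ¬ ∃ p, IsCycle E p ∧ pathWeight p < 0)
    {a b : V} (hC : ∃ p, IsCycle (E ∪ {(a, 0, b)}) p ∧ pathWeight p < 0) :
    ReachLE E b a (-1) := by
  obtain ⟨p, ⟨-, v, hp, hv⟩, hpw⟩ := hC
  by_contra hba
  have hba' : ∀ w, ReachLE E b a w → 0 ≤ w := fun w h => by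
    by_contra hw
    exact hba (h.mono (by omega))
  rcases hp.reachLE_or_split_of_insert hba' with h | ⟨w₁, w₂, hw, h₁, h₂⟩
  · rw [hv] at h
    have := nonneg_of_reachLE_self hE h
    omega
  · rw [hv] at h₂
    have := hba' _ (h₂.trans h₁)
    omega

end ReachLE

theorem maximal_graph_total_preorder_general {Q : Type} (E : Set (Q × ℤ × Q))
    (hNoNeg : ¬ ∃ p, IsCycle E p ∧ pathWeight p < 0)
    (hMax : ∀ q q' : Q, (q, (0 : ℤ), q') ∉ E →
      ∃ p, IsCycle (E ∪ {(q, (0 : ℤ), q')}) p ∧ pathWeight p < 0) :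
    (∀ q : Q, (q, (0 : ℤ), q) ∈ E) ∧
    (∀ q q' q'' : Q, (q, (0 : ℤ), q') ∈ E → (q', (0 : ℤ), q'') ∈ E →
      (q, (0 : ℤ), q'') ∈ E) ∧
    (∀ q q' : Q, (q, (0 : ℤ), q') ∈ E ∨ (q', (0 : ℤ), q) ∈ E) := by
  have back : ∀ q q', (q, (0 : ℤ), q') ∉ E → ReachLE E q' q (-1) := fun q q' h =>
    reachLE_neg_one_of_negCycle_insert hNoNeg (hMax q q' h)
  have cycle_nonneg : ∀ {v : Q} {w : ℤ}, ReachLE E v v w → 0 ≤ w :=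
    nonneg_of_reachLE_self hNoNeg
  refine ⟨fun q => ?_, fun q q' q'' h₁ h₂ => ?_, fun q q' => ?_⟩
  · by_contra h
    have := cycle_nonneg (back q q h)
    omega
  · by_contra h
    have := cycle_nonneg ((back q q'' h).trans ((ReachLE.of_mem h₁).trans (ReachLE.of_mem h₂)))
    omega
  · by_contra! h
    have := cycle_nonneg ((back q q' h.1).trans (back q' q h.2))
    omega

/-- let `E` be a `ℤ`-labelled directed graph on a finite vertex set
`Q`, with no negative cycles, which is maximal in the sense that adding any missing
`0`-labelled edge creates a negative cycle. Then the relation `q ≤ q'` iff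
`(q, 0, q') ∈ E` is reflexive, transitive and total. -/
theorem maximal_graph_total_preorder {Q : Type} [Fintype Q] (E : Set (Q × ℤ × Q))
    (hNoNeg : ¬ ∃ p, IsCycle E p ∧ pathWeight p < 0)
    (hMax : ∀ q q' : Q, (q, (0 : ℤ), q') ∉ E →
      ∃ p, IsCycle (E ∪ {(q, (0 : ℤ), q')}) p ∧ pathWeight p < 0) :
    (∀ q : Q, (q, (0 : ℤ), q) ∈ E) ∧
    (∀ q q' q'' : Q, (q, (0 : ℤ), q') ∈ E → (q', (0 : ℤ), q'') ∈ E →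
      (q, (0 : ℤ), q'') ∈ E) ∧
    (∀ q q' : Q, (q, (0 : ℤ), q') ∈ E ∨ (q', (0 : ℤ), q) ∈ E) :=
  maximal_graph_total_preorder_general E hNoNeg hMax
end
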